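/- Correctness of the DP for NAP with 0/1 survival probabilities: for a rooted tree T with leaf costs c(x_i), define F[w,d] as the minimum total cost of a set of leaves A ⊆ off(w) such that the sum of λ(e) over edges e in T_w lying on a path from w to some leaf of A is at least d. Then for an internal vertex v with children u_1,...,u_t, the recurrence G[v,1,d] = F[u_1,d]' (where F[u,d]' accounts for the edge (v,u)) and G[v,i+1,d] = min_{d' ∈ [d]_0} (G[v,i,d-d'] + F[u_{i+1},d']') with F[v,d] = G[v,t,d] correctly computes these minima; consequently the instance is a yes-instance iff F[root, D] ≤ B. -/

import Mathlib

/-- Rooted edge-weighted trees with leaves labelled by `ι`: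
a leaf, or an internal vertex with a list of (edge weight, subtree) children. -/
inductive WTree (ι : Type) : Type
  | leaf (x : ι)
  | node (children : List (ℕ × WTree ι))

namespace WTree

variable {ι : Type} [DecidableEq ι]

mutual
  /-- The set of leaf labels of a tree. -/
  def leaves : WTree ι → Finset ι
    | .leaf x => {x}
    | .node cs => leavesL cs
  /-- The set of leaf labels of a list of weighted subtrees. -/
  def leavesL : List (ℕ × WTree ι) → Finset ι
    | [] => ∅
    | (_, t) :: cs => leaves t ∪ leavesL cs
end

mutual
  /-- For a 0/1 selection `A` of surviving leaves, `pd A t` is the total weight of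
  the edges of `t` lying on a path from the root of `t` to a leaf of `A`. -/
  def pd (A : Finset ι) : WTree ι → ℕ
    | .leaf _ => 0
    | .node cs => pdL A cs
  /-- `pdL A cs`: as `pd`, for a list of children together with their incoming edges. -/
  def pdL (A : Finset ι) : List (ℕ × WTree ι) → ℕ
    | [] => 0
    | (w, t) :: cs => (if (leaves t ∩ A).Nonempty then w + pd A t else 0) + pdL A cs
end

open Classical in
/-- `mcE c w t d`: minimum cost of a leaf selection of `t` achieving diversity `≥ d`
in `t` together with its incoming edge of weight `w` (the primed table `F[·,·]'`). -/
noncomputable def mcE (c : ι → ℕ) (w : ℕ) (t : WTree ι) (d : ℕ) : ℕ∞ :=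
  (t.leaves.powerset.filter
    (fun A => d ≤ (if (t.leaves ∩ A).Nonempty then w else 0) + pd A t)).inf
    (fun A => ((∑ x ∈ A, c x : ℕ) : ℕ∞))

open Classical in
/-- `mcList c cs d`: minimum cost of a selection achieving diversity `≥ d` among the
children subtrees `cs` including their incoming edges (the table `G[v,i,·]`). -/
noncomputable def mcList (c : ι → ℕ) (cs : List (ℕ × WTree ι)) (d : ℕ) : ℕ∞ :=
  ((leavesL cs).powerset.filter (fun A => d ≤ pdL A cs)).inf
    (fun A => ((∑ x ∈ A, c x : ℕ) : ℕ∞))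

open Classical in
/-- `mc0 c t d`: minimum cost of a leaf selection achieving diversity `≥ d` within
`t` only (the table `F[v,·]`; at the root no incoming edge exists). -/
noncomputable def mc0 (c : ι → ℕ) (t : WTree ι) (d : ℕ) : ℕ∞ :=
  (t.leaves.powerset.filter (fun A => d ≤ pd A t)).inf
    (fun A => ((∑ x ∈ A, c x : ℕ) : ℕ∞))

/-!
All three tables are minima of the leaf cost over selections meeting a diversity bound
(`minCost`). Diversity is additive over children with disjoint leaf sets: a selection below `v`
is the union of its parts below the first child and below the remaining children, and its
diversity is the sum of theirs (`pdL_cons_union`). Hence an optimal selection for the list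
splits into selections for `F[u,d']'` and `G[v,i,d-d']`, where `d'` is the diversity of the
first part capped at `d`; conversely any two such selections combine.
-/

noncomputable def minCost {α : Type*} (c : α → ℕ) (S : Finset α) (P : Finset α → Prop)
    [DecidablePred P] : ℕ∞ :=
  (S.powerset.filter P).inf fun A => ((∑ x ∈ A, c x : ℕ) : ℕ∞)

section minCost

variable {α : Type*} {c : α → ℕ} {S : Finset α} {P : Finset α → Prop} [DecidablePred P]

theorem minCost_le {A : Finset α} (hA : A ⊆ S) (hP : P A) :
    minCost c S P ≤ ((∑ x ∈ A, c x : ℕ) : ℕ∞) :=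
  Finset.inf_le (Finset.mem_filter.2 ⟨Finset.mem_powerset.2 hA, hP⟩)

theorem le_minCost_iff {b : ℕ∞} :
    b ≤ minCost c S P ↔ ∀ A ⊆ S, P A → b ≤ ((∑ x ∈ A, c x : ℕ) : ℕ∞) := by
  simp [minCost, Finset.le_inf_iff]

theorem minCost_le_iff {b : ℕ∞} (hb : b < ⊤) :
    minCost c S P ≤ b ↔ ∃ A ⊆ S, P A ∧ ((∑ x ∈ A, c x : ℕ) : ℕ∞) ≤ b := by
  simp [minCost, Finset.inf_le_iff hb, and_assoc]

theorem minCost_congr {S' : Finset α} {P' : Finset α → Prop} [DecidablePred P'] (hS : S = S')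
    (hP : ∀ A ⊆ S, P A ↔ P' A) : minCost c S P = minCost c S' P' := by
  subst hS
  unfold minCost
  congr 1
  exact Finset.filter_congr fun A hA => hP A (Finset.mem_powerset.1 hA)

theorem minCost_le_add [DecidableEq α] {S₁ S₂ : Finset α} {P₁ P₂ : Finset α → Prop}
    [DecidablePred P₁] [DecidablePred P₂] (hS : Disjoint S₁ S₂)
    (h : ∀ A₁ ⊆ S₁, P₁ A₁ → ∀ A₂ ⊆ S₂, P₂ A₂ → A₁ ∪ A₂ ⊆ S ∧ P (A₁ ∪ A₂)) :
    minCost c S P ≤ minCost c S₁ P₁ + minCost c S₂ P₂ := by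
  rcases eq_top_or_lt_top (minCost c S₁ P₁ + minCost c S₂ P₂) with htop | hlt
  · exact htop ▸ le_top
  obtain ⟨hlt₁, hlt₂⟩ := WithTop.add_lt_top.1 hlt
  obtain ⟨A₁, hA₁, hP₁, hc₁⟩ := (minCost_le_iff hlt₁).1 le_rfl
  obtain ⟨A₂, hA₂, hP₂, hc₂⟩ := (minCost_le_iff hlt₂).1 le_rfl
  obtain ⟨hA, hP⟩ := h A₁ hA₁ hP₁ A₂ hA₂ hP₂
  calc minCost c S P ≤ ((∑ x ∈ A₁ ∪ A₂, c x : ℕ) : ℕ∞) := minCost_le hA hP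
    _ = ((∑ x ∈ A₁, c x : ℕ) : ℕ∞) + ((∑ x ∈ A₂, c x : ℕ) : ℕ∞) := by
      rw [Finset.sum_union (hS.mono hA₁ hA₂), Nat.cast_add]
    _ ≤ _ := add_le_add hc₁ hc₂

theorem minCost_singleton (x : α) :
    minCost c {x} P = if P ∅ then 0 else if P {x} then ((c x : ℕ) : ℕ∞) else ⊤ := by
  classical
  have hpow : ({x} : Finset α).powerset = {∅, {x}} := by
    ext A; simp [Finset.subset_singleton_iff]
  unfold minCost
  rw [hpow]
  split_ifs <;> simp [Finset.filter_insert, Finset.filter_singleton, *]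

end minCost

def pdEdge (A : Finset ι) (w : ℕ) (t : WTree ι) : ℕ :=
  (if (t.leaves ∩ A).Nonempty then w else 0) + pd A t

mutual
  theorem pd_congr {A B : Finset ι} :
      ∀ {t : WTree ι}, A ∩ t.leaves = B ∩ t.leaves → pd A t = pd B t
    | .leaf _, _ => rfl
    | .node _, h => pdL_congr h
  theorem pdL_congr {A B : Finset ι} :
      ∀ {cs : List (ℕ × WTree ι)}, A ∩ leavesL cs = B ∩ leavesL cs → pdL A cs = pdL B cs
    | [], _ => rfl
    | (w, t) :: cs, h => by
      have restrict : ∀ s ⊆ leavesL ((w, t) :: cs), A ∩ s = B ∩ s := fun s hs => by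
        rw [← Finset.inter_eq_right.2 hs, ← Finset.inter_assoc, h, Finset.inter_assoc]
      have ht := restrict t.leaves Finset.subset_union_left
      have hcs := restrict (leavesL cs) Finset.subset_union_right
      rw [pdL, pdL, Finset.inter_comm _ A, Finset.inter_comm _ B, ht, pd_congr ht, pdL_congr hcs]
end

mutual
  theorem pd_empty : ∀ t : WTree ι, pd ∅ t = 0
    | .leaf _ => rfl
    | .node cs => pdL_empty cs
  theorem pdL_empty : ∀ cs : List (ℕ × WTree ι), pdL ∅ cs = 0
    | [] => rfl
    | (_, _) :: cs => by simp [pdL, pdL_empty cs]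
end

theorem pd_inter_leaves (A : Finset ι) (t : WTree ι) : pd (A ∩ t.leaves) t = pd A t :=
  pd_congr (by rw [Finset.inter_assoc, Finset.inter_self])

theorem pdL_inter_leavesL (A : Finset ι) (cs : List (ℕ × WTree ι)) :
    pdL (A ∩ leavesL cs) cs = pdL A cs :=
  pdL_congr (by rw [Finset.inter_assoc, Finset.inter_self])

theorem pdEdge_inter_leaves (A : Finset ι) (w : ℕ) (t : WTree ι) :
    pdEdge (A ∩ t.leaves) w t = pdEdge A w t := by
  rw [pdEdge, pdEdge, pd_inter_leaves, Finset.inter_comm A, ← Finset.inter_assoc,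
    Finset.inter_self]

theorem pdL_cons (A : Finset ι) (w : ℕ) (t : WTree ι) (cs : List (ℕ × WTree ι)) :
    pdL A ((w, t) :: cs) = pdEdge A w t + pdL A cs := by
  by_cases h : (t.leaves ∩ A).Nonempty
  · simp [pdL, pdEdge, h]
  · have h0 : pd A t = 0 := by
      rw [← pd_empty t]
      exact pd_congr (by simpa [Finset.inter_comm] using Finset.not_nonempty_iff_eq_empty.1 h)
    simp [pdL, pdEdge, h, h0]

theorem pdL_cons_union {A₁ A₂ : Finset ι} {w : ℕ} {t : WTree ι} {cs : List (ℕ × WTree ι)}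
    (h : Disjoint t.leaves (leavesL cs)) (h₁ : A₁ ⊆ t.leaves) (h₂ : A₂ ⊆ leavesL cs) :
    pdL (A₁ ∪ A₂) ((w, t) :: cs) = pdEdge A₁ w t + pdL A₂ cs := by
  have ht : (A₁ ∪ A₂) ∩ t.leaves = A₁ ∩ t.leaves := by
    rw [Finset.union_inter_distrib_right,
      Finset.disjoint_iff_inter_eq_empty.1 ((h.mono_right h₂).symm), Finset.union_empty]
  have hcs : (A₁ ∪ A₂) ∩ leavesL cs = A₂ ∩ leavesL cs := by
    rw [Finset.union_inter_distrib_right,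
      Finset.disjoint_iff_inter_eq_empty.1 (h.mono_left h₁), Finset.empty_union]
  rw [pdL_cons, ← pdEdge_inter_leaves, ht, pdEdge_inter_leaves, ← pdL_inter_leavesL, hcs,
    pdL_inter_leavesL]

section

variable (c : ι → ℕ)

theorem mcE_eq_minCost (w : ℕ) (t : WTree ι) (d : ℕ) :
    mcE c w t d = minCost c t.leaves fun A => d ≤ pdEdge A w t := rfl

theorem mcList_eq_minCost (cs : List (ℕ × WTree ι)) (d : ℕ) :
    mcList c cs d = minCost c (leavesL cs) fun A => d ≤ pdL A cs := rfl

theorem mc0_eq_minCost (t : WTree ι) (d : ℕ) :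
    mc0 c t d = minCost c t.leaves fun A => d ≤ pd A t := rfl

theorem mcE_leaf (w : ℕ) (x : ι) (d : ℕ) :
    mcE c w (.leaf x) d = if d = 0 then 0 else if d ≤ w then ((c x : ℕ) : ℕ∞) else ⊤ := by
  simp [mcE_eq_minCost, leaves, minCost_singleton, pdEdge, pd]

theorem mcList_singleton (w : ℕ) (t : WTree ι) (d : ℕ) : mcList c [(w, t)] d = mcE c w t d := by
  rw [mcList_eq_minCost, mcE_eq_minCost]
  exact minCost_congr (by simp [leavesL]) fun A _ => by rw [pdL_cons, pdL, add_zero]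

theorem mc0_node (cs : List (ℕ × WTree ι)) (d : ℕ) : mc0 c (.node cs) d = mcList c cs d := rfl

theorem mcList_cons {w : ℕ} {t : WTree ι} {cs : List (ℕ × WTree ι)}
    (h : Disjoint t.leaves (leavesL cs)) (d : ℕ) :
    mcList c ((w, t) :: cs) d =
      (Finset.range (d + 1)).inf fun d' => mcE c w t d' + mcList c cs (d - d') := by
  simp only [mcList_eq_minCost, mcE_eq_minCost]
  apply le_antisymm
  · refine Finset.le_inf fun d' hd' => minCost_le_add h fun A₁ h₁ hd₁ A₂ h₂ hd₂ =>
      ⟨Finset.union_subset_union h₁ h₂, ?_⟩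
    rw [Finset.mem_range] at hd'
    rw [pdL_cons_union h h₁ h₂]
    omega
  · refine le_minCost_iff.2 fun A hA hd => ?_
    have hsplit : A ∩ t.leaves ∪ A ∩ leavesL cs = A := by
      rw [← Finset.inter_union_distrib_left]; exact Finset.inter_eq_left.2 hA
    rw [← hsplit, pdL_cons_union h Finset.inter_subset_right Finset.inter_subset_right] at hd
    set e := pdEdge (A ∩ t.leaves) w t
    calc _ ≤ (minCost c t.leaves fun A => min d e ≤ pdEdge A w t) +
          minCost c (leavesL cs) fun A => d - min d e ≤ pdL A cs :=
          Finset.inf_le (f := fun d' => (minCost c t.leaves fun A => d' ≤ pdEdge A w t) +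
            minCost c (leavesL cs) fun A => d - d' ≤ pdL A cs) (Finset.mem_range.2 (by omega))
      _ ≤ ((∑ x ∈ A ∩ t.leaves, c x : ℕ) : ℕ∞) + ((∑ x ∈ A ∩ leavesL cs, c x : ℕ) : ℕ∞) :=
          add_le_add (minCost_le Finset.inter_subset_right (min_le_right _ _))
            (minCost_le Finset.inter_subset_right (by omega))
      _ = ((∑ x ∈ A, c x : ℕ) : ℕ∞) := by
        rw [← Nat.cast_add, ← Finset.sum_union (h.mono Finset.inter_subset_right
          Finset.inter_subset_right), hsplit]

theorem exists_le_iff_mc0_le (t : WTree ι) (B D : ℕ) :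
    (∃ A ⊆ t.leaves, (∑ x ∈ A, c x) ≤ B ∧ D ≤ pd A t) ↔ mc0 c t D ≤ (B : ℕ∞) := by
  rw [mc0_eq_minCost, minCost_le_iff (ENat.natCast_lt_top B)]
  exact exists_congr fun A => and_congr_right fun _ => by rw [Nat.cast_le, and_comm]

end

/-- Correctness of the DP for NAP with 0/1 survival probabilities:
leaf initialization, `G[v,1,d] = F[u_1,d]'`, the recurrence
`G[v,i+1,d] = min_{d' ≤ d} (G[v,i,d-d'] + F[u_{i+1},d']')` (for children with
disjoint leaf sets), `F[v,d] = G[v,t,d]`, and consequently the instance is a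
yes-instance iff `F[root,D] ≤ B`. -/
theorem stmt_13 (c : ι → ℕ) (B D : ℕ) (t : WTree ι) :
    (∀ (w : ℕ) (x : ι) (d : ℕ),
      mcE c w (.leaf x) d =
        if d = 0 then 0 else if d ≤ w then ((c x : ℕ) : ℕ∞) else ⊤) ∧
    (∀ (w1 : ℕ) (t1 : WTree ι) (d : ℕ), mcList c [(w1, t1)] d = mcE c w1 t1 d) ∧
    (∀ (w1 : ℕ) (t1 : WTree ι) (cs : List (ℕ × WTree ι)) (d : ℕ),
      Disjoint (leaves t1) (leavesL cs) →
      mcList c ((w1, t1) :: cs) d =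
        (Finset.range (d + 1)).inf (fun d' => mcE c w1 t1 d' + mcList c cs (d - d'))) ∧
    (∀ (cs : List (ℕ × WTree ι)) (d : ℕ), mc0 c (.node cs) d = mcList c cs d) ∧
    ((∃ A ⊆ t.leaves, (∑ x ∈ A, c x) ≤ B ∧ D ≤ pd A t) ↔ mc0 c t D ≤ (B : ℕ∞)) :=
  ⟨mcE_leaf c, mcList_singleton c, fun _ _ _ d h => mcList_cons c h d, mc0_node c,
    exists_le_iff_mc0_le c t B D⟩

end WTree
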